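/- Let Δ > 0, σ > 0, ε ≥ 0 and δ ∈ (0,1) satisfy the analytic-Gaussian condition Φ(Δ/(2σ) − εσ/Δ) − e^ε·Φ(−Δ/(2σ) − εσ/Δ) ≤ δ. Then for all a, b ∈ ℝ with |a − b| ≤ Δ, the probability that dpsign outputs +1 satisfies Φ(a/σ) ≤ e^ε · Φ(b/σ) + δ. -/

import Mathlib

open Real

/-- The cumulative distribution function of the standard normal distribution. -/
noncomputable def stdNormalCDF (x : ℝ) : ℝ :=
  ∫ t in Set.Iic x, (1 / Real.sqrt (2 * Real.pi)) * Real.exp (-(t ^ 2) / 2)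

/-!
With `c = Δ/σ`, the function `g u = Φ(u + c) - e^ε Φ(u)` has derivative `φ(u + c) - e^ε φ(u)`,
which is nonnegative exactly for `u ≤ u₀ = -c/2 - ε/c`, so `g` is maximal at `u₀`, where its
value is the left-hand side of the analytic-Gaussian condition. Since `a/σ ≤ b/σ + c` and `Φ` is
monotone, `Φ(a/σ) - e^ε Φ(b/σ) ≤ g(b/σ) ≤ g(u₀) ≤ δ`.
-/

theorem hasDerivAt_integral_Iic {f : ℝ → ℝ} (hf : MeasureTheory.Integrable f)
    (hf_cont : Continuous f) (x : ℝ) :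
    HasDerivAt (fun y => ∫ t in Set.Iic y, f t) (f x) x := by
  have h_split : (fun y => ∫ t in Set.Iic y, f t) =
      fun y => (∫ t in Set.Iic 0, f t) + ∫ t in (0 : ℝ)..y, f t := by
    funext y
    rw [← intervalIntegral.integral_Iic_sub_Iic hf.integrableOn hf.integrableOn]
    ring
  rw [h_split]
  exact (intervalIntegral.integral_hasDerivAt_right hf.intervalIntegrable
    (hf_cont.stronglyMeasurableAtFilter _ _) hf_cont.continuousAt).const_add _

noncomputable def stdNormalPDF (t : ℝ) : ℝ :=
  (1 / Real.sqrt (2 * Real.pi)) * Real.exp (-(t ^ 2) / 2)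

theorem stdNormalPDF_pos (t : ℝ) : 0 < stdNormalPDF t := by
  unfold stdNormalPDF
  positivity

theorem integrable_stdNormalPDF : MeasureTheory.Integrable stdNormalPDF := by
  convert (integrable_exp_neg_mul_sq (by norm_num : (0 : ℝ) < 1 / 2)).const_mul
    (1 / Real.sqrt (2 * Real.pi)) using 2 with t
  unfold stdNormalPDF
  ring_nf

theorem continuous_stdNormalPDF : Continuous stdNormalPDF := by
  unfold stdNormalPDF
  fun_prop

theorem hasDerivAt_stdNormalCDF (x : ℝ) : HasDerivAt stdNormalCDF (stdNormalPDF x) x :=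
  hasDerivAt_integral_Iic integrable_stdNormalPDF continuous_stdNormalPDF x

theorem stdNormalCDF_strictMono : StrictMono stdNormalCDF :=
  strictMono_of_hasDerivAt_pos hasDerivAt_stdNormalCDF stdNormalPDF_pos

/-- The likelihood ratio `φ(u + c) / φ(u) = exp (-c u - c² / 2)` is decreasing in `u`. -/
theorem exp_mul_stdNormalPDF_le_iff {c : ℝ} (hc : 0 < c) (ε u : ℝ) :
    Real.exp ε * stdNormalPDF u ≤ stdNormalPDF (u + c) ↔ u ≤ -(c / 2) - ε / c := by
  unfold stdNormalPDF
  rw [mul_left_comm, ← Real.exp_add, mul_le_mul_iff_right₀ (by positivity), Real.exp_le_exp,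
    show -(c / 2) - ε / c = (-(c ^ 2 / 2) - ε) / c by field_simp, le_div_iff₀ hc]
  constructor <;> intro h <;> nlinarith

theorem stdNormalCDF_add_sub_exp_mul_le {c : ℝ} (hc : 0 < c) (ε u : ℝ) :
    stdNormalCDF (u + c) - Real.exp ε * stdNormalCDF u ≤
      stdNormalCDF (c / 2 - ε / c) - Real.exp ε * stdNormalCDF (-(c / 2) - ε / c) := by
  set g : ℝ → ℝ := fun u => stdNormalCDF (u + c) - Real.exp ε * stdNormalCDF u
  have hg : ∀ u, HasDerivAt g (stdNormalPDF (u + c) - Real.exp ε * stdNormalPDF u) u := fun u =>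
    (by simpa using (hasDerivAt_stdNormalCDF (u + c)).comp_add_const u c :
      HasDerivAt (fun u => stdNormalCDF (u + c)) _ u).sub
      ((hasDerivAt_stdNormalCDF u).const_mul _)
  have hg_diff : Differentiable ℝ g := fun u => (hg u).differentiableAt
  have hmax : IsMaxOn g Set.univ (-(c / 2) - ε / c) := by
    refine isMaxOn_univ_of_deriv hg_diff.continuous.continuousAt hg_diff.differentiableOn
      hg_diff.differentiableOn (fun x hx => ?_) (fun x hx => ?_)
    · rw [(hg x).deriv, sub_nonneg, exp_mul_stdNormalPDF_le_iff hc]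
      exact le_of_lt hx
    · rw [(hg x).deriv, sub_nonpos]
      exact (lt_of_not_ge (mt (exp_mul_stdNormalPDF_le_iff hc ε x).1 (not_le.2 hx))).le
  have h_shift : -(c / 2) - ε / c + c = c / 2 - ε / c := by ring
  simpa [g, h_shift] using isMaxOn_univ_iff.1 hmax u

theorem dpsign_plus_one_dp_general
    (Δ σ ε δ : ℝ) (hΔ : 0 < Δ) (hσ : 0 < σ)
    (hAG : stdNormalCDF (Δ / (2 * σ) - ε * σ / Δ)
        - Real.exp ε * stdNormalCDF (-(Δ / (2 * σ)) - ε * σ / Δ) ≤ δ) :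
    ∀ a b : ℝ, |a - b| ≤ Δ →
      stdNormalCDF (a / σ) ≤ Real.exp ε * stdNormalCDF (b / σ) + δ := by
  intro a b hab
  have hc : 0 < Δ / σ := div_pos hΔ hσ
  have h_half : Δ / σ / 2 = Δ / (2 * σ) := by field_simp
  have h_ratio : ε / (Δ / σ) = ε * σ / Δ := by field_simp
  have h_shift : a / σ ≤ b / σ + Δ / σ := by
    rw [← add_div]
    gcongr
    linarith [(abs_le.1 hab).2]
  have h_max := stdNormalCDF_add_sub_exp_mul_le hc ε (b / σ)
  rw [h_half, h_ratio] at h_max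
  linarith [stdNormalCDF_strictMono.monotone h_shift]

/-- Under the analytic-Gaussian condition, the probability that the dpsign compressor
outputs `+1` satisfies the `(ε, δ)`-DP inequality. -/
theorem dpsign_plus_one_dp
    (Δ σ ε δ : ℝ) (hΔ : 0 < Δ) (hσ : 0 < σ) (hε : 0 ≤ ε) (hδ : δ ∈ Set.Ioo (0 : ℝ) 1)
    (hAG : stdNormalCDF (Δ / (2 * σ) - ε * σ / Δ)
        - Real.exp ε * stdNormalCDF (-(Δ / (2 * σ)) - ε * σ / Δ) ≤ δ) :
    ∀ a b : ℝ, |a - b| ≤ Δ →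
      stdNormalCDF (a / σ) ≤ Real.exp ε * stdNormalCDF (b / σ) + δ :=
  dpsign_plus_one_dp_general Δ σ ε δ hΔ hσ hAG
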